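/- arXiv:2404.08183 — 3 statements merged into one kernel-verified Lean document; each statement's English description precedes it below -/
import Mathlib

section
/- Let n ≥ 2 and let a, b be positive integers with ⌈a/2⌉ ≤ b ≤ a. Then the sequence (1, a, a, ..., a, b) of length n+1 (with n−1 middle entries all equal to a) is a pure O-sequence. -/
/-- The degree of a monomial (exponent vector) in `s` variables. -/
def mdeg {s : ℕ} (u : Fin s → ℕ) : ℕ := ∑ i, u i

/-- A (nonempty, finite) set of monomials is an order ideal if it is closed
under divisibility (componentwise `≤` of exponent vectors). -/
def IsOrderIdeal {s : ℕ} (A : Finset (Fin s → ℕ)) : Prop :=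
  A.Nonempty ∧ ∀ u ∈ A, ∀ v : Fin s → ℕ, v ≤ u → v ∈ A

/-- `u` is a maximal element of `A` with respect to divisibility. -/
def IsMaximalIn {s : ℕ} (A : Finset (Fin s → ℕ)) (u : Fin s → ℕ) : Prop :=
  u ∈ A ∧ ∀ v ∈ A, u ≤ v → v = u

/-- An order ideal is pure if all its maximal monomials have the same degree. -/
def IsPure {s : ℕ} (A : Finset (Fin s → ℕ)) : Prop :=
  ∀ u v : Fin s → ℕ, IsMaximalIn A u → IsMaximalIn A v → mdeg u = mdeg v

/-- The maximal degree of a monomial in `A`. -/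
def topDegree {s : ℕ} (A : Finset (Fin s → ℕ)) : ℕ := A.sup mdeg

/-- The number of monomials of degree `i` in `A`. -/
def hVec {s : ℕ} (A : Finset (Fin s → ℕ)) (i : ℕ) : ℕ :=
  (A.filter (fun u => mdeg u = i)).card

/-- The h-vector `(h_0, h_1, ..., h_n)` of `A`, where `n = topDegree A`. -/
def hVector {s : ℕ} (A : Finset (Fin s → ℕ)) : List ℕ :=
  (List.range (topDegree A + 1)).map (hVec A)

/-- A finite sequence is a pure O-sequence if it is the h-vector of some
pure order ideal of monomials. -/
def IsPureOSequence (h : List ℕ) : Prop :=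
  ∃ (s : ℕ) (A : Finset (Fin s → ℕ)), IsOrderIdeal A ∧ IsPure A ∧ hVector A = h

/-!
If `A` and `B` are pure order ideals whose maximal monomials all have degree `n`, then
placing them in disjoint sets of variables and taking their union gives again such an order
ideal, and its h-vector is the sum of theirs in every positive degree. The principal order
ideals of `x^n` and of `x^(n-1) y` have h-vectors `(1, 1, …, 1, 1)` and `(1, 2, …, 2, 1)`;
summing `2b - a` copies of the first and `a - b` copies of the second gives
`(1, a, …, a, b)`, and `⌈a/2⌉ ≤ b ≤ a` makes both counts nonnegative.
-/

theorem Fin.append_eq_iff {α : Type*} {s t : ℕ} {u : Fin s → α} {v : Fin t → α}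
    {w : Fin (s + t) → α} :
    Fin.append u v = w ↔ u = w ∘ Fin.castAdd t ∧ v = w ∘ Fin.natAdd s := by
  constructor
  · rintro rfl
    exact ⟨funext fun i => (Fin.append_left u v i).symm,
      funext fun i => (Fin.append_right u v i).symm⟩
  · rintro ⟨rfl, rfl⟩
    exact Fin.append_castAdd_natAdd

theorem Fin.append_inj {α : Type*} {s t : ℕ} {u u' : Fin s → α} {v v' : Fin t → α} :
    Fin.append u v = Fin.append u' v' ↔ u = u' ∧ v = v' := by
  rw [Fin.append_eq_iff]
  simp only [funext_iff, Function.comp_apply, Fin.append_left, Fin.append_right]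

theorem Fin.le_append_iff {α : Type*} [Preorder α] {s t : ℕ} {u : Fin s → α} {v : Fin t → α}
    {w : Fin (s + t) → α} :
    w ≤ Fin.append u v ↔ w ∘ Fin.castAdd t ≤ u ∧ w ∘ Fin.natAdd s ≤ v := by
  simp only [Pi.le_def, Fin.forall_fin_add, Function.comp_apply, Fin.append_left,
    Fin.append_right]

section

variable {s t : ℕ}

lemma mdeg_mono {u v : Fin s → ℕ} (h : u ≤ v) : mdeg u ≤ mdeg v :=
  Finset.sum_le_sum fun i _ => h i

lemma mdeg_eq_zero_iff {u : Fin s → ℕ} : mdeg u = 0 ↔ u = 0 := by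
  simp [mdeg, Finset.sum_eq_zero_iff, funext_iff]

lemma mdeg_eq_add (w : Fin (s + t) → ℕ) :
    mdeg w = mdeg (w ∘ Fin.castAdd t) + mdeg (w ∘ Fin.natAdd s) :=
  Fin.sum_univ_add w

lemma mdeg_append (u : Fin s → ℕ) (v : Fin t → ℕ) :
    mdeg (Fin.append u v) = mdeg u + mdeg v := by
  simp only [mdeg, Fin.sum_univ_add, Fin.append_left, Fin.append_right]

lemma mdeg_zero : mdeg (0 : Fin s → ℕ) = 0 := mdeg_eq_zero_iff.2 rfl

lemma IsOrderIdeal.zero_mem {A : Finset (Fin s → ℕ)} (hA : IsOrderIdeal A) : 0 ∈ A := by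
  obtain ⟨u, hu⟩ := hA.1
  exact hA.2 u hu 0 bot_le

lemma IsOrderIdeal.hVec_zero {A : Finset (Fin s → ℕ)} (hA : IsOrderIdeal A) :
    hVec A 0 = 1 := by
  rw [hVec, Finset.card_eq_one]
  refine ⟨0, Finset.ext fun u => ?_⟩
  simp only [Finset.mem_filter, mdeg_eq_zero_iff, Finset.mem_singleton]
  refine ⟨And.right, ?_⟩
  rintro rfl
  exact ⟨hA.zero_mem, rfl⟩

lemma exists_le_isMaximalIn {A : Finset (Fin s → ℕ)} {u : Fin s → ℕ} (hu : u ∈ A) :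
    ∃ m, u ≤ m ∧ IsMaximalIn A m := by
  obtain ⟨m, hum, hm⟩ := A.exists_le_maximal hu
  exact ⟨m, hum, hm.1, fun v hv hmv => le_antisymm (hm.2 hv hmv) hmv⟩

def IsPureOfDegree (A : Finset (Fin s → ℕ)) (n : ℕ) : Prop :=
  ∀ u, IsMaximalIn A u → mdeg u = n

lemma IsPureOfDegree.isPure {A : Finset (Fin s → ℕ)} {n : ℕ} (hA : IsPureOfDegree A n) :
    IsPure A := fun u v hu hv => (hA u hu).trans (hA v hv).symm

lemma IsPureOfDegree.topDegree_eq {A : Finset (Fin s → ℕ)} {n : ℕ} (hI : IsOrderIdeal A)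
    (hA : IsPureOfDegree A n) : topDegree A = n := by
  apply le_antisymm
  · refine Finset.sup_le fun u hu => ?_
    obtain ⟨m, hum, hm⟩ := exists_le_isMaximalIn hu
    exact hA m hm ▸ mdeg_mono hum
  · obtain ⟨u, hu⟩ := hI.1
    obtain ⟨m, -, hm⟩ := exists_le_isMaximalIn hu
    exact hA m hm ▸ Finset.le_sup hm.1

/-- `A` and `B` placed in disjoint sets of variables and glued at the monomial `1`. -/
def wedge (A : Finset (Fin s → ℕ)) (B : Finset (Fin t → ℕ)) : Finset (Fin (s + t) → ℕ) :=
  A.image (Fin.append · 0) ∪ B.image (Fin.append 0 ·)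

variable {A : Finset (Fin s → ℕ)} {B : Finset (Fin t → ℕ)}

lemma mem_wedge {w : Fin (s + t) → ℕ} :
    w ∈ wedge A B ↔ (w ∘ Fin.castAdd t ∈ A ∧ w ∘ Fin.natAdd s = 0) ∨
      (w ∘ Fin.castAdd t = 0 ∧ w ∘ Fin.natAdd s ∈ B) := by
  simp only [wedge, Finset.mem_union, Finset.mem_image, Fin.append_eq_iff]
  constructor
  · rintro (⟨u, hu, rfl, h⟩ | ⟨v, hv, h, rfl⟩)
    exacts [Or.inl ⟨hu, h.symm⟩, Or.inr ⟨h.symm, hv⟩]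
  · rintro (⟨hu, h⟩ | ⟨h, hv⟩)
    exacts [Or.inl ⟨_, hu, rfl, h.symm⟩, Or.inr ⟨_, hv, h.symm, rfl⟩]

lemma isOrderIdeal_wedge (hA : IsOrderIdeal A) (hB : IsOrderIdeal B) :
    IsOrderIdeal (wedge A B) := by
  obtain ⟨u, hu⟩ := hA.1
  refine ⟨⟨_, Finset.mem_union_left _ (Finset.mem_image_of_mem _ hu)⟩, fun w hw v hvw => ?_⟩
  have hleft : v ∘ Fin.castAdd t ≤ w ∘ Fin.castAdd t := fun i => hvw _
  have hright : v ∘ Fin.natAdd s ≤ w ∘ Fin.natAdd s := fun i => hvw _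
  rw [mem_wedge] at hw ⊢
  rcases hw with ⟨hwA, hw0⟩ | ⟨hw0, hwB⟩
  · exact Or.inl ⟨hA.2 _ hwA _ hleft, le_antisymm (hw0 ▸ hright) bot_le⟩
  · exact Or.inr ⟨le_antisymm (hw0 ▸ hleft) bot_le, hB.2 _ hwB _ hright⟩

lemma isPureOfDegree_wedge {n : ℕ} (hA : IsPureOfDegree A n) (hB : IsPureOfDegree B n) :
    IsPureOfDegree (wedge A B) n := by
  intro w ⟨hw, hwmax⟩
  rw [mem_wedge] at hw
  rcases hw with ⟨hwA, hw0⟩ | ⟨hw0, hwB⟩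
  · have hmax : IsMaximalIn A (w ∘ Fin.castAdd t) := by
      refine ⟨hwA, fun v hv hle => ?_⟩
      have hmem : Fin.append v 0 ∈ wedge A B :=
        Finset.mem_union_left _ (Finset.mem_image_of_mem _ hv)
      exact (Fin.append_eq_iff.1 (hwmax _ hmem (Fin.le_append_iff.2 ⟨hle, hw0.le⟩))).1
    rw [mdeg_eq_add, hA _ hmax, hw0, mdeg_zero, add_zero]
  · have hmax : IsMaximalIn B (w ∘ Fin.natAdd s) := by
      refine ⟨hwB, fun v hv hle => ?_⟩
      have hmem : Fin.append 0 v ∈ wedge A B :=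
        Finset.mem_union_right _ (Finset.mem_image_of_mem _ hv)
      exact (Fin.append_eq_iff.1 (hwmax _ hmem (Fin.le_append_iff.2 ⟨hw0.le, hle⟩))).2
    rw [mdeg_eq_add, hB _ hmax, hw0, mdeg_zero, zero_add]

lemma hVec_wedge {d : ℕ} (hd : d ≠ 0) : hVec (wedge A B) d = hVec A d + hVec B d := by
  have hinl : Function.Injective fun u : Fin s → ℕ => Fin.append u (0 : Fin t → ℕ) :=
    fun u u' h => (Fin.append_inj.1 h).1
  have hinr : Function.Injective fun v : Fin t → ℕ => Fin.append (0 : Fin s → ℕ) v :=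
    fun v v' h => (Fin.append_inj.1 h).2
  have hdisj : Disjoint ((A.filter (mdeg · = d)).image (Fin.append · 0))
      ((B.filter (mdeg · = d)).image (Fin.append 0 ·)) := by
    simp only [Finset.disjoint_left, Finset.mem_image, Finset.mem_filter]
    rintro _ ⟨u, ⟨-, hu⟩, rfl⟩ ⟨v, -, h⟩
    rw [← (Fin.append_inj.1 h).1, mdeg_zero] at hu
    exact hd hu.symm
  unfold hVec wedge
  rw [Finset.filter_union, Finset.filter_image, Finset.filter_image]
  simp only [mdeg_append, mdeg_zero, add_zero, zero_add]
  rw [Finset.card_union_of_disjoint hdisj, Finset.card_image_of_injective _ hinl,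
    Finset.card_image_of_injective _ hinr]

lemma isOrderIdeal_Iic (m : Fin s → ℕ) : IsOrderIdeal (Finset.Iic m) :=
  ⟨⟨m, Finset.mem_Iic.2 le_rfl⟩,
    fun _ hu _ hvu => Finset.mem_Iic.2 (hvu.trans (Finset.mem_Iic.1 hu))⟩

lemma isPureOfDegree_Iic (m : Fin s → ℕ) : IsPureOfDegree (Finset.Iic m) (mdeg m) :=
  fun _ hu => congrArg mdeg (hu.2 m (Finset.mem_Iic.2 le_rfl) (Finset.mem_Iic.1 hu.1)).symm

/-- A monomial `x^i y^j` of degree `d` is determined by `j`. -/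
lemma hVec_Iic_two (p q d : ℕ) :
    hVec (Finset.Iic ![p, q]) d =
      ((Finset.range (q + 1)).filter fun j => j ≤ d ∧ d - j ≤ p).card := by
  refine Finset.card_nbij' (· 1) (fun j => ![d - j, j]) ?_ ?_ ?_ ?_ <;> intro x hx <;>
    simp_all [Pi.le_def, Fin.forall_fin_two, mdeg, funext_iff] <;> omega

/-- Degree `0` is left out, where every h-vector is `1`: this makes the class closed
under `+`. -/
def PureRealizable (n : ℕ) (h : ℕ → ℕ) : Prop :=
  ∃ (s : ℕ) (A : Finset (Fin s → ℕ)), IsOrderIdeal A ∧ IsPureOfDegree A n ∧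
    ∀ d, d ≠ 0 → d ≤ n → hVec A d = h d

variable {n : ℕ} {f g : ℕ → ℕ}

lemma PureRealizable.add (hf : PureRealizable n f) (hg : PureRealizable n g) :
    PureRealizable n (f + g) := by
  obtain ⟨s, A, hA, hAn, hAf⟩ := hf
  obtain ⟨t, B, hB, hBn, hBg⟩ := hg
  refine ⟨s + t, wedge A B, isOrderIdeal_wedge hA hB, isPureOfDegree_wedge hAn hBn,
    fun d hd hdn => ?_⟩
  rw [hVec_wedge hd, hAf d hd hdn, hBg d hd hdn, Pi.add_apply]

lemma PureRealizable.add_nsmul (hf : PureRealizable n f) (hg : PureRealizable n g) (m : ℕ) :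
    PureRealizable n (f + m • g) := by
  induction m with
  | zero => simpa using hf
  | succ m ih => simpa only [succ_nsmul, ← add_assoc] using ih.add hg

lemma PureRealizable.nsmul_add_nsmul (hf : PureRealizable n f) (hg : PureRealizable n g)
    {p q : ℕ} (hpq : 0 < p + q) : PureRealizable n (p • f + q • g) := by
  rcases p with _ | p
  · obtain ⟨q, rfl⟩ : ∃ q', q = q' + 1 := ⟨q - 1, by omega⟩
    simpa only [zero_smul, zero_add, succ_nsmul'] using hg.add_nsmul hg q
  · simpa only [succ_nsmul'] using (hf.add_nsmul hf p).add_nsmul hg q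

lemma pureRealizable_one (n : ℕ) : PureRealizable n 1 := by
  refine ⟨2, _, isOrderIdeal_Iic ![n, 0], ?_, fun d hd hdn => ?_⟩
  · simpa [mdeg] using isPureOfDegree_Iic ![n, 0]
  · rw [hVec_Iic_two]
    simp only [Finset.card_filter, zero_add, Finset.sum_range_one, Pi.one_apply]
    exact if_pos (by omega)

lemma pureRealizable_pair (hn : n ≠ 0) : PureRealizable n fun d => if d < n then 2 else 1 := by
  refine ⟨2, _, isOrderIdeal_Iic ![n - 1, 1], ?_, fun d hd hdn => ?_⟩
  · convert isPureOfDegree_Iic ![n - 1, 1]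
    simp [mdeg]
    omega
  · rw [hVec_Iic_two]
    simp only [Finset.card_filter, Finset.sum_range_succ, Finset.sum_range_zero]
    split_ifs <;> omega

lemma PureRealizable.isPureOSequence {h : ℕ → ℕ} (hh : PureRealizable n h) :
    IsPureOSequence (1 :: (List.range n).map fun i => h (i + 1)) := by
  obtain ⟨s, A, hA, hAn, hAh⟩ := hh
  refine ⟨s, A, hA, hAn.isPure, ?_⟩
  rw [hVector, hAn.topDegree_eq hA, List.range_succ_eq_map, List.map_cons, List.map_map,
    hA.hVec_zero]
  exact congrArg _ (List.map_congr_left fun i hi => hAh _ i.succ_ne_zero (List.mem_range.1 hi))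

end

lemma List.map_range_succ_eq_replicate_append {α : Type*} {m : ℕ} {f : ℕ → α} {a : α}
    (hf : ∀ i < m, f i = a) : (List.range (m + 1)).map f = List.replicate m a ++ [f m] := by
  rw [List.range_succ, List.map_append,
    List.map_congr_left fun i hi => hf i (List.mem_range.1 hi), List.map_const',
    List.length_range, List.map_singleton]

theorem stmt_2_general (n a b : ℕ) (hn : 2 ≤ n) (ha : 0 < a)
    (h1 : (a + 1) / 2 ≤ b) (h2 : b ≤ a) :
    IsPureOSequence (1 :: (List.replicate (n - 1) a ++ [b])) := by
  obtain ⟨m, rfl⟩ : ∃ m, n = m + 1 := ⟨n - 1, by omega⟩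
  have hreal := (pureRealizable_pair (n := m + 1) m.succ_ne_zero).nsmul_add_nsmul
    (pureRealizable_one _) (p := a - b) (q := 2 * b - a) (by omega)
  have hseq := hreal.isPureOSequence
  rw [List.map_range_succ_eq_replicate_append (a := a) fun i hi => by simp [hi]; omega] at hseq
  rw [Nat.add_sub_cancel]
  convert hseq using 4
  simp only [Pi.add_apply, Pi.smul_apply, smul_eq_mul, Pi.one_apply, lt_irrefl, if_false]
  omega

/-- For `n ≥ 2` and `⌈a/2⌉ ≤ b ≤ a`, the sequence `(1, a, a, ..., a, b)` of
length `n+1` is a pure O-sequence. -/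
theorem stmt_2 (n a b : ℕ) (hn : 2 ≤ n) (ha : 0 < a) (hb : 0 < b)
    (h1 : (a + 1) / 2 ≤ b) (h2 : b ≤ a) :
    IsPureOSequence (1 :: (List.replicate (n - 1) a ++ [b])) :=
  stmt_2_general n a b hn ha h1 h2
end

section
/- Let n ≥ 4 and let a, b be positive integers with 2b < a. Then the sequence (1, a, a, ..., a, b) of length n+1 (with n−1 middle entries all equal to a) is not a pure O-sequence. -/
/-!
Let `A` be a pure order ideal with h-vector `(1, a, …, a, b)`. Purity means every monomial of
degree `< n` can be multiplied by some variable inside `A`. So every monomial of degree `n - 1`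
divides one of degree `n`; if every monomial of `A` involves at most two variables, the latter
has at most two divisors of degree `n - 1`, and `a = h_{n-1} ≤ 2 h_n = 2b`.

So it suffices to rule out a squarefree cubic `xyz ∈ A`. Consider the graph whose vertices are the
variables of `A` and whose edges are the squarefree quadrics of `A`; call a variable unsquared if
its square is not in `A`. Since `h_1 = h_2`, there are at most as many edges as unsquared
variables. An unsquared variable `v` lies on an edge `vc`, and `vcd ∈ A` for some `d`: either
`v` lies on a second edge `vd`, or `d = c`, and then `vc` is an edge whose only unsquared end is
`v`. This is enough for Hall's condition, so each edge can be assigned one of its unsquared ends,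
injectively. But `xyz` extends to `xyzd ∈ A`: if `d ∈ {x, y, z}` the three edges of the triangle
need three unsquared vertices among `x, y, z`, one of which is squared; otherwise the six edges
of the complete graph on `{x, y, z, d}` need six distinct vertices among four.
-/

open Finset

namespace PureOSequence

section Hall

variable {α : Type*} [DecidableEq α] {U : Finset α} {E : Finset (Finset α)}

lemma card_le_card_biUnion_incident (hE : ∀ p ∈ E, #p ≤ 2)
    (hU : ∀ v ∈ U, 2 ≤ #{p ∈ E | v ∈ p} ∨ ∃ p ∈ E, v ∈ p ∧ ∀ w ∈ p, w ∈ U → w = v)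
    (S : Finset α) (hS : S ⊆ U) : #S ≤ #(S.biUnion fun v => {p ∈ E | v ∈ p}) := by
  induction S using Finset.strongInduction with
  | _ S ih =>
  set N := S.biUnion fun v => {p ∈ E | v ∈ p}
  by_cases hdeg : ∀ v ∈ S, 2 ≤ #{p ∈ E | v ∈ p}
  · have hN : ∀ v ∈ S, 2 ≤ #{p ∈ N | v ∈ p} := by
      intro v hv
      refine (hdeg v hv).trans (card_le_card fun p hp => ?_)
      exact mem_filter.2 ⟨mem_biUnion.2 ⟨v, hv, hp⟩, (mem_filter.1 hp).2⟩
    -- double counting the incidences between `S` and the edges meeting it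
    have hcount : #S * 2 ≤ #N * 2 :=
      calc #S * 2 ≤ ∑ p ∈ N, #(S ∩ p) := le_sum_card_inter hN
        _ ≤ ∑ _p ∈ N, 2 := sum_le_sum fun p hp => by
          obtain ⟨v, -, hpv⟩ := mem_biUnion.1 hp
          exact (card_le_card inter_subset_right).trans (hE p (mem_filter.1 hpv).1)
        _ = #N * 2 := by rw [sum_const, smul_eq_mul]
    omega
  · obtain ⟨v, hvS, hv⟩ := not_forall₂.1 hdeg
    obtain ⟨p, hpE, hvp, hpU⟩ := (hU v (hS hvS)).resolve_left (by omega)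
    -- `p` meets `S` only in `v`, so it is not counted for `S.erase v`
    set N' := (S.erase v).biUnion fun v => {p ∈ E | v ∈ p}
    have hpN' : p ∉ N' := by
      intro hp
      obtain ⟨w, hw, hwp⟩ := mem_biUnion.1 hp
      exact ne_of_mem_erase hw (hpU w (mem_filter.1 hwp).2 (hS (mem_of_mem_erase hw)))
    have hsub : insert p N' ⊆ N :=
      insert_subset (mem_biUnion.2 ⟨v, hvS, mem_filter.2 ⟨hpE, hvp⟩⟩)
        (biUnion_subset_biUnion_of_subset_left _ (erase_subset v S))
    calc #S = #(S.erase v) + 1 := (card_erase_add_one hvS).symm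
      _ ≤ #N' + 1 := by
        gcongr
        exact ih _ (erase_ssubset hvS) ((erase_subset v S).trans hS)
      _ = #(insert p N') := (card_insert_of_notMem hpN').symm
      _ ≤ #N := card_le_card hsub

lemma choose_two_le_card_inter (hE : ∀ p ∈ E, #p ≤ 2)
    (hU : ∀ v ∈ U, 2 ≤ #{p ∈ E | v ∈ p} ∨ ∃ p ∈ E, v ∈ p ∧ ∀ w ∈ p, w ∈ U → w = v)
    (hcard : #E ≤ #U) {K : Finset α} (hK : K.powersetCard 2 ⊆ E) :
    (#K).choose 2 ≤ #(K ∩ U) := by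
  obtain ⟨f, hf, hfE⟩ :=
    (all_card_le_biUnion_card_iff_exists_injective fun v : U => {p ∈ E | v.1 ∈ p}).1 fun S => by
      have hSU : S.image Subtype.val ⊆ U := by
        intro v hv
        obtain ⟨w, -, rfl⟩ := mem_image.1 hv
        exact w.2
      simpa [card_image_of_injective _ Subtype.val_injective, image_biUnion] using
        card_le_card_biUnion_incident hE hU _ hSU
  -- the injection given by Hall's theorem hits every edge, since `#E ≤ #U`
  have himage : U.attach.image f = E := by
    refine eq_of_subset_of_card_le (fun p hp => ?_) ?_
    · obtain ⟨v, -, rfl⟩ := mem_image.1 hp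
      exact (mem_filter.1 (hfE v)).1
    · rw [card_image_of_injective _ hf, card_attach]
      exact hcard
  rw [← card_powersetCard]
  calc #(K.powersetCard 2) ≤ #{v ∈ U.attach | f v ∈ K.powersetCard 2} := by
        refine card_le_card_of_surjOn f fun p hp => ?_
        obtain ⟨v, -, hv⟩ := mem_image.1 (himage ▸ hK hp)
        exact ⟨v, mem_filter.2 ⟨mem_attach _ v, hv ▸ hp⟩, hv⟩
    _ ≤ #(K ∩ U) := by
        refine card_le_card_of_injOn Subtype.val (fun v hv => ?_) Subtype.val_injective.injOn
        have hvK := (mem_powersetCard.1 (mem_filter.1 hv).2).1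
        exact mem_inter.2 ⟨hvK (mem_filter.1 (hfE v)).2, v.2⟩

end Hall

variable {s : ℕ}

lemma mdeg_mono {u v : Fin s → ℕ} (h : u ≤ v) : mdeg u ≤ mdeg v :=
  sum_le_sum fun i _ => h i

lemma mdeg_add (u v : Fin s → ℕ) : mdeg (u + v) = mdeg u + mdeg v := by
  simp [mdeg, sum_add_distrib]

@[simp]
lemma mdeg_single (i : Fin s) (c : ℕ) : mdeg (Pi.single i c) = c := by
  simp [mdeg]

lemma single_le_iff {i : Fin s} {c : ℕ} {u : Fin s → ℕ} : Pi.single i c ≤ u ↔ c ≤ u i := by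
  refine ⟨fun h => by simpa using h i, fun h j => ?_⟩
  rcases eq_or_ne j i with rfl | hj
  · simpa using h
  · simp [hj]

lemma single_left_injective {c : ℕ} (hc : c ≠ 0) :
    Function.Injective fun i : Fin s => (Pi.single i c : Fin s → ℕ) := by
  intro i j hij
  by_contra hne
  simpa [Pi.single_apply, hne, hc] using congrFun hij i

lemma eq_single_of_mdeg_eq_one {u : Fin s → ℕ} (h : mdeg u = 1) : ∃ i, u = Pi.single i 1 := by
  obtain ⟨i, hi⟩ : ∃ i, u i ≠ 0 := by
    by_contra! h0
    simp [mdeg, h0] at h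
  have hsum := add_sum_erase univ u (mem_univ i)
  rw [← mdeg, h] at hsum
  have hrest : ∀ j ∈ univ.erase i, u j = 0 := sum_eq_zero_iff.1 (by omega)
  refine ⟨i, funext fun j => ?_⟩
  rcases eq_or_ne j i with rfl | hj
  · simp only [Pi.single_eq_same]
    omega
  · simp [hj, hrest j (mem_erase.2 ⟨hj, mem_univ j⟩)]

def sqfree (p : Finset (Fin s)) : Fin s → ℕ := fun j => if j ∈ p then 1 else 0

lemma mdeg_sqfree (p : Finset (Fin s)) : mdeg (sqfree p) = #p := by
  simp [mdeg, sqfree]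

lemma sqfree_mono {p q : Finset (Fin s)} (h : p ⊆ q) : sqfree p ≤ sqfree q := by
  intro j
  by_cases hj : j ∈ p
  · simp [sqfree, hj, h hj]
  · simp [sqfree, hj]

lemma sqfree_le {p : Finset (Fin s)} {u : Fin s → ℕ} (h : ∀ j ∈ p, u j ≠ 0) : sqfree p ≤ u := by
  intro j
  by_cases hj : j ∈ p
  · simpa [sqfree, hj] using Nat.one_le_iff_ne_zero.2 (h j hj)
  · simp [sqfree, hj]

lemma sqfree_injective : Function.Injective (sqfree (s := s)) := by
  intro p q h
  ext j
  have := congrFun h j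
  by_cases hp : j ∈ p <;> by_cases hq : j ∈ q <;> simp_all [sqfree]

lemma sqfree_ne_single_two (p : Finset (Fin s)) (i : Fin s) : sqfree p ≠ Pi.single i 2 := by
  intro h
  have := congrFun h i
  by_cases hi : i ∈ p <;> simp [sqfree, hi] at this

lemma sqfree_pair {i j : Fin s} (h : i ≠ j) :
    sqfree {i, j} = Pi.single i 1 + Pi.single j 1 := by
  funext k
  by_cases hki : k = i <;> by_cases hkj : k = j <;> simp_all [sqfree]

lemma sqfree_insert_le (d : Fin s) (p : Finset (Fin s)) :
    sqfree (insert d p) ≤ sqfree p + Pi.single d 1 := by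
  intro j
  by_cases hj : j = d <;> by_cases hjp : j ∈ p <;> simp_all [sqfree]

def msupp (u : Fin s → ℕ) : Finset (Fin s) := {i | u i ≠ 0}

lemma mem_msupp {u : Fin s → ℕ} {i : Fin s} : i ∈ msupp u ↔ u i ≠ 0 := by
  simp [msupp]

variable {A : Finset (Fin s → ℕ)}

lemma exists_isMaximalIn_le {u : Fin s → ℕ} (hu : u ∈ A) : ∃ m, IsMaximalIn A m ∧ u ≤ m := by
  obtain ⟨m, hum, hm⟩ := A.exists_le_maximal hu
  exact ⟨m, ⟨hm.1, fun v hv hmv => le_antisymm (hm.2 hv hmv) hmv⟩, hum⟩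

lemma exists_add_single_mem_of_isPure (hA : IsOrderIdeal A) (hpure : IsPure A)
    {u : Fin s → ℕ} (hu : u ∈ A) (hlt : mdeg u < topDegree A) :
    ∃ i, u + Pi.single i 1 ∈ A := by
  obtain ⟨v, hv, hvtop⟩ := A.exists_mem_eq_sup hA.1 mdeg
  obtain ⟨m', hm', hvm'⟩ := exists_isMaximalIn_le hv
  obtain ⟨m, hm, hum⟩ := exists_isMaximalIn_le hu
  have hmdeg : mdeg m = topDegree A :=
    (hpure m m' hm hm').trans <| le_antisymm (le_sup hm'.1) (hvtop.trans_le (mdeg_mono hvm'))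
  obtain ⟨i, hi⟩ : ∃ i, u i < m i := by
    by_contra! h
    have := mdeg_mono (show m ≤ u from h)
    omega
  refine ⟨i, hA.2 m hm.1 _ fun j => ?_⟩
  rcases eq_or_ne j i with rfl | hj
  · simpa using hi
  · simpa [Pi.single_apply, hj] using hum j

lemma hVec_le_mul_hVec_succ {r k : ℕ} (hsupp : ∀ v ∈ A, mdeg v = k + 1 → #(msupp v) ≤ r)
    (hext : ∀ u ∈ A, mdeg u = k → ∃ i, u + Pi.single i 1 ∈ A) :
    hVec A k ≤ r * hVec A (k + 1) := by
  set D := {v ∈ A | mdeg v = k + 1}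
  have hcover : {u ∈ A | mdeg u = k} ⊆
      D.biUnion fun v => (msupp v).image fun i => v - Pi.single i 1 := by
    intro u hu
    obtain ⟨huA, hk⟩ := mem_filter.1 hu
    obtain ⟨i, hi⟩ := hext u huA hk
    refine mem_biUnion.2 ⟨_, mem_filter.2 ⟨hi, by rw [mdeg_add, mdeg_single, hk]⟩, ?_⟩
    exact mem_image.2 ⟨i, mem_msupp.2 (by simp), add_tsub_cancel_right u _⟩
  calc hVec A k ≤ #(D.biUnion fun v => (msupp v).image fun i => v - Pi.single i 1) :=
        card_le_card hcover
    _ ≤ ∑ v ∈ D, #((msupp v).image fun i => v - Pi.single i 1) := card_biUnion_le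
    _ ≤ ∑ _v ∈ D, r := sum_le_sum fun v hv =>
        card_image_le.trans (hsupp v (mem_filter.1 hv).1 (mem_filter.1 hv).2)
    _ = r * hVec A (k + 1) := by rw [sum_const, smul_eq_mul, mul_comm]; rfl

lemma hVec_eq_getElem {L : List ℕ} (h : hVector A = L) {i : ℕ} (hi : i < L.length) :
    hVec A i = L[i] := by
  subst h
  simp [hVector]

lemma length_hVector : (hVector A).length = topDegree A + 1 := by
  simp [hVector]

lemma IsOrderIdeal.isLowerSet (hA : IsOrderIdeal A) : IsLowerSet (A : Set (Fin s → ℕ)) :=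
  fun u v hvu hu => hA.2 u hu v hvu

lemma hVec_of_hVector_eq {n a b : ℕ} (hn : 1 ≤ n)
    (h : hVector A = 1 :: (List.replicate (n - 1) a ++ [b])) :
    topDegree A = n ∧ (∀ i, 1 ≤ i → i < n → hVec A i = a) ∧ hVec A n = b := by
  refine ⟨?_, fun i h1 h2 => ?_, ?_⟩
  · have := congrArg List.length h
    simp [length_hVector] at this
    omega
  · rw [hVec_eq_getElem h (by simp; omega)]
    obtain ⟨j, rfl⟩ : ∃ j, i = j + 1 := ⟨i - 1, by omega⟩
    simp [List.getElem_append_left (show j < (List.replicate (n - 1) a).length by simp; omega)]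
  · rw [hVec_eq_getElem h (by simp; omega)]
    obtain ⟨j, rfl⟩ : ∃ j, n = j + 1 := ⟨n - 1, by omega⟩
    simp [List.getElem_append_right]

def vars (A : Finset (Fin s → ℕ)) : Finset (Fin s) := {i | Pi.single i 1 ∈ A}

def squaredVars (A : Finset (Fin s → ℕ)) : Finset (Fin s) := {i ∈ vars A | Pi.single i 2 ∈ A}

def unsquaredVars (A : Finset (Fin s → ℕ)) : Finset (Fin s) := {i ∈ vars A | Pi.single i 2 ∉ A}

/-- The edges of the graph on the variables given by the squarefree quadrics of `A`. -/
def edges (A : Finset (Fin s → ℕ)) : Finset (Finset (Fin s)) :=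
  {p ∈ univ.powersetCard 2 | sqfree p ∈ A}

lemma card_of_mem_edges {p : Finset (Fin s)} (hp : p ∈ edges A) : #p = 2 :=
  (mem_powersetCard.1 (mem_filter.1 hp).1).2

lemma mem_edges_pair {i j : Fin s} (hij : i ≠ j) (h : Pi.single i 1 + Pi.single j 1 ∈ A) :
    {i, j} ∈ edges A :=
  mem_filter.2 ⟨mem_powersetCard.2 ⟨subset_univ _, card_pair hij⟩, sqfree_pair hij ▸ h⟩

lemma hVec_one_eq_card_vars : hVec A 1 = #(vars A) := by
  have : {u ∈ A | mdeg u = 1} = (vars A).image fun i => Pi.single i 1 := by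
    ext u
    simp only [mem_filter, mem_image, vars, mem_univ, true_and]
    constructor
    · rintro ⟨hu, h1⟩
      obtain ⟨i, rfl⟩ := eq_single_of_mdeg_eq_one h1
      exact ⟨i, hu, rfl⟩
    · rintro ⟨i, hi, rfl⟩
      exact ⟨hi, mdeg_single i 1⟩
  rw [hVec, this, card_image_of_injective _ (single_left_injective one_ne_zero)]

lemma card_squaredVars_add_card_edges_le : #(squaredVars A) + #(edges A) ≤ hVec A 2 := by
  have hdisj :
      Disjoint ((squaredVars A).image fun i => Pi.single i 2) ((edges A).image sqfree) := by
    rw [disjoint_left]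
    rintro _ h1 h2
    obtain ⟨i, -, rfl⟩ := mem_image.1 h1
    obtain ⟨p, -, hp⟩ := mem_image.1 h2
    exact sqfree_ne_single_two p i hp
  rw [← card_image_of_injective _ (single_left_injective two_ne_zero),
    ← card_image_of_injective _ sqfree_injective, ← card_union_of_disjoint hdisj]
  refine card_le_card (union_subset (fun u hu => ?_) fun u hu => ?_)
  · obtain ⟨i, hi, rfl⟩ := mem_image.1 hu
    exact mem_filter.2 ⟨(mem_filter.1 hi).2, mdeg_single i 2⟩
  · obtain ⟨p, hp, rfl⟩ := mem_image.1 hu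
    exact mem_filter.2 ⟨(mem_filter.1 hp).2, by rw [mdeg_sqfree, card_of_mem_edges hp]⟩

lemma card_edges_le_card_unsquaredVars (h12 : hVec A 2 ≤ hVec A 1) :
    #(edges A) ≤ #(unsquaredVars A) := by
  have hsplit := card_filter_add_card_filter_not (s := vars A) fun i => Pi.single i 2 ∈ A
  have := card_squaredVars_add_card_edges_le (A := A)
  rw [hVec_one_eq_card_vars] at h12
  unfold squaredVars at this
  unfold unsquaredVars
  omega

lemma unsquaredVars_incident (hA : IsLowerSet (A : Set (Fin s → ℕ)))
    (hext : ∀ u ∈ A, mdeg u ≤ 2 → ∃ i, u + Pi.single i 1 ∈ A) :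
    ∀ v ∈ unsquaredVars A, 2 ≤ #{p ∈ edges A | v ∈ p} ∨
      ∃ p ∈ edges A, v ∈ p ∧ ∀ w ∈ p, w ∈ unsquaredVars A → w = v := by
  intro v hv
  obtain ⟨hv1, hv2⟩ := mem_filter.1 hv
  replace hv1 : Pi.single v 1 ∈ A := (mem_filter.1 hv1).2
  obtain ⟨c, hc⟩ := hext _ hv1 (by simp)
  have hcv : c ≠ v := by
    rintro rfl
    exact hv2 (by rwa [← Pi.single_add] at hc)
  obtain ⟨d, hd⟩ := hext _ hc (by simp [mdeg_add])
  have hdv : d ≠ v := by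
    rintro rfl
    exact hv2 (hA (single_le_iff.2 (by simp [hcv])) hd)
  have hvc := mem_edges_pair hcv.symm hc
  by_cases hdc : d = c
  · subst hdc
    refine Or.inr ⟨_, hvc, by simp, fun w hw hwU => ?_⟩
    rcases mem_insert.1 hw with rfl | hw
    · rfl
    rw [mem_singleton] at hw
    subst hw
    exact absurd (hA (single_le_iff.2 (by simp [hcv])) hd) (mem_filter.1 hwU).2
  · left
    have hvd := mem_edges_pair hdv.symm (hA (add_le_add_left le_self_add _) hd)
    have hne : ({v, c} : Finset (Fin s)) ≠ {v, d} := by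
      intro h
      have : d ∈ ({v, c} : Finset (Fin s)) := h ▸ mem_insert_of_mem (mem_singleton_self d)
      simp [hdv, hdc] at this
    calc 2 = #({{v, c}, {v, d}} : Finset (Finset (Fin s))) := (card_pair hne).symm
      _ ≤ _ := card_le_card <| by
        simp [insert_subset_iff, hvc, hvd]

lemma sqfree_notMem_of_card_eq_three (hA : IsLowerSet (A : Set (Fin s → ℕ)))
    (h12 : hVec A 2 ≤ hVec A 1) (hext : ∀ u ∈ A, mdeg u ≤ 3 → ∃ i, u + Pi.single i 1 ∈ A)
    {p : Finset (Fin s)} (hp : #p = 3) : sqfree p ∉ A := by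
  intro hpA
  obtain ⟨d, hd⟩ := hext _ hpA (by rw [mdeg_sqfree, hp])
  have hK : (insert d p).powersetCard 2 ⊆ edges A := by
    intro q hq
    rw [mem_powersetCard] at hq
    exact mem_filter.2 ⟨mem_powersetCard.2 ⟨subset_univ _, hq.2⟩,
      hA ((sqfree_mono hq.1).trans (sqfree_insert_le d p)) hd⟩
  have hchoose := choose_two_le_card_inter (fun q hq => (card_of_mem_edges hq).le)
    (unsquaredVars_incident hA fun u hu h => hext u hu (by omega))
    (card_edges_le_card_unsquaredVars h12) hK
  by_cases hdp : d ∈ p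
  · have hdU : d ∉ unsquaredVars A := fun h =>
      (mem_filter.1 h).2 (hA (single_le_iff.2 (by simp [sqfree, hdp])) hd)
    have hle : #(p ∩ unsquaredVars A) ≤ #(p.erase d) := card_le_card fun w hw =>
      mem_erase.2 ⟨fun h => hdU (h ▸ (mem_inter.1 hw).2), (mem_inter.1 hw).1⟩
    rw [insert_eq_of_mem hdp, hp] at hchoose
    rw [card_erase_of_mem hdp, hp] at hle
    rw [Nat.choose_two_right] at hchoose
    omega
  · have hle := card_le_card (inter_subset_left (s₁ := insert d p) (s₂ := unsquaredVars A))
    rw [card_insert_of_notMem hdp, hp] at hchoose hle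
    rw [Nat.choose_two_right] at hchoose
    omega

lemma card_msupp_le_two (hA : IsLowerSet (A : Set (Fin s → ℕ))) (h12 : hVec A 2 ≤ hVec A 1)
    (hext : ∀ u ∈ A, mdeg u ≤ 3 → ∃ i, u + Pi.single i 1 ∈ A) {u : Fin s → ℕ} (hu : u ∈ A) :
    #(msupp u) ≤ 2 := by
  by_contra! h
  obtain ⟨p, hpu, hp⟩ := exists_subset_card_eq (show 3 ≤ #(msupp u) by omega)
  exact sqfree_notMem_of_card_eq_three hA h12 hext hp
    (hA (sqfree_le fun j hj => mem_msupp.1 (hpu hj)) hu)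

end PureOSequence

open PureOSequence in
theorem stmt_3_general (n a b : ℕ) (hn : 4 ≤ n) (hab : 2 * b < a) :
    ¬ IsPureOSequence (1 :: (List.replicate (n - 1) a ++ [b])) := by
  rintro ⟨s, A, hA, hpure, hvec⟩
  obtain ⟨htop, hmid, hlast⟩ := hVec_of_hVector_eq (by omega) hvec
  have hext : ∀ u ∈ A, mdeg u < n → ∃ i, u + Pi.single i 1 ∈ A := fun u hu hlt =>
    exists_add_single_mem_of_isPure hA hpure hu (htop ▸ hlt)
  have h12 : hVec A 2 ≤ hVec A 1 := by
    rw [hmid 1 (by omega) (by omega), hmid 2 (by omega) (by omega)]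
  have hcount := hVec_le_mul_hVec_succ (k := n - 1)
    (fun v hv _ => card_msupp_le_two hA.isLowerSet h12 (fun u hu h3 => hext u hu (by omega)) hv)
    fun u hu hk => hext u hu (by omega)
  rw [hmid (n - 1) (by omega) (by omega), Nat.sub_add_cancel (by omega), hlast] at hcount
  omega

/-- For `n ≥ 4` and `2b < a`, the sequence `(1, a, a, ..., a, b)` of length
`n+1` is not a pure O-sequence. -/
theorem stmt_3 (n a b : ℕ) (hn : 4 ≤ n) (ha : 0 < a) (hb : 0 < b) (hab : 2 * b < a) :
    ¬ IsPureOSequence (1 :: (List.replicate (n - 1) a ++ [b])) :=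
  stmt_3_general n a b hn hab
end

section
/- Let n ≥ 4 and let A be a pure order ideal of monomials in s variables whose h-vector is (1, a, a, ..., a, b) of length n+1 (with n−1 middle entries all equal to a), where a and b are positive integers. Then every maximal monomial of A (with respect to divisibility) is of the form x_i^n or x_i · x_j^{n−1} for some variables x_i ≠ x_j; that is, every maximal exponent vector is either n times a standard basis vector, or the sum of one standard basis vector e_i and (n−1) times a different standard basis vector e_j. -/
/-!
Consider the graph on the variables of `A` whose edges are the monomials of degree two in `A`,
a square `x_i ^ 2` being a loop at `i`. Every variable divides a monomial of degree three in `A`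
(maximal monomials have degree `n ≥ 4`), so every connected component contains a loop or a
triangle and therefore has at least as many edges as vertices. Since `h₁ = h₂`, every component
has exactly as many edges as vertices. Growing a vertex set inside a component one adjacent vertex
at a time, each step adding at least one edge, it follows that no set of variables in a component
spans more edges than it has vertices. A maximal monomial with two exponents `≥ 2` spans three
edges on two variables; one with three variables has, by degree `≥ 4`, a square or a fourth
variable, hence at least four edges on three variables or five on four.
-/

open Finset

section

variable {s : ℕ}

theorem mdeg_add (u v : Fin s → ℕ) : mdeg (u + v) = mdeg u + mdeg v :=
  Finset.sum_add_distrib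

theorem mdeg_single (i : Fin s) (k : ℕ) : mdeg (Pi.single i k) = k := by
  simp [mdeg]

theorem mdeg_strictMono : StrictMono (mdeg (s := s)) := fun u v huv => by
  obtain ⟨hle, i, hi⟩ := Pi.lt_def.1 huv
  exact Finset.sum_lt_sum (fun j _ => hle j) ⟨i, mem_univ i, hi⟩

theorem eq_of_le_of_mdeg_le {u v : Fin s → ℕ} (huv : u ≤ v) (h : mdeg v ≤ mdeg u) : u = v :=
  huv.eq_or_lt.resolve_right fun hlt => (mdeg_strictMono hlt).not_ge h

theorem exists_ne_zero_of_mdeg_ne_zero {u : Fin s → ℕ} (h : mdeg u ≠ 0) : ∃ i, u i ≠ 0 := by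
  by_contra! h'
  exact h (Finset.sum_eq_zero fun i _ => h' i)

theorem single_one_injective : Function.Injective fun i : Fin s => (Pi.single i 1 : Fin s → ℕ) :=
  fun i j h => by
    by_contra hij
    simpa [hij] using congr_fun h i

theorem single_add_single_apply_ne_zero {i j l : Fin s} :
    (Pi.single i 1 + Pi.single j 1 : Fin s → ℕ) l ≠ 0 ↔ l = i ∨ l = j := by
  by_cases hi : l = i <;> by_cases hj : l = j <;> simp [Pi.single_apply, hi, hj]

theorem single_le {u : Fin s → ℕ} {i : Fin s} {k : ℕ} (h : k ≤ u i) : Pi.single i k ≤ u := by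
  intro l
  by_cases hl : l = i
  · subst hl; simpa using h
  · simp [hl]

theorem single_add_single_le {u : Fin s → ℕ} {i j : Fin s} (hij : i ≠ j) (hi : u i ≠ 0)
    (hj : u j ≠ 0) : Pi.single i 1 + Pi.single j 1 ≤ u := by
  intro l
  by_cases hli : l = i
  · subst hli; simp [hij, Nat.one_le_iff_ne_zero.2 hi]
  · by_cases hlj : l = j
    · subst hlj; simp [hli, Nat.one_le_iff_ne_zero.2 hj]
    · simp [hli, hlj]

theorem single_add_single_self_le {u : Fin s → ℕ} {i : Fin s} (hi : 2 ≤ u i) :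
    Pi.single i 1 + Pi.single i 1 ≤ u := by
  rw [← Pi.single_add]
  exact single_le hi

theorem eq_single_or_eq_single_add_single {u : Fin s → ℕ} (hu : mdeg u ≠ 0)
    (hsq : ∀ i j, i ≠ j → 2 ≤ u i → 2 ≤ u j → False)
    (hthree : ∀ i j k, i ≠ j → i ≠ k → j ≠ k → u i ≠ 0 → u j ≠ 0 → u k ≠ 0 → False) :
    (∃ i, u = Pi.single i (mdeg u)) ∨
      ∃ i j, i ≠ j ∧ u = Pi.single i 1 + Pi.single j (mdeg u - 1) := by
  obtain ⟨i, hi⟩ := exists_ne_zero_of_mdeg_ne_zero hu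
  by_cases hj : ∃ j, j ≠ i ∧ u j ≠ 0
  · obtain ⟨j, hji, hj⟩ := hj
    have hu2 : u = Pi.single i (u i) + Pi.single j (u j) := by
      funext l
      by_cases hli : l = i
      · subst hli; simp [hji.symm]
      by_cases hlj : l = j
      · subst hlj; simp [hli]
      simp only [Pi.add_apply, Pi.single_eq_of_ne hli, Pi.single_eq_of_ne hlj, add_zero]
      by_contra hl
      exact hthree i j l hji.symm (Ne.symm hli) (Ne.symm hlj) hi hj hl
    have hdeg : mdeg u = u i + u j := by
      simpa only [mdeg_add, mdeg_single] using congrArg mdeg hu2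
    right
    obtain h1 | h1 : u i = 1 ∨ u j = 1 := by
      by_contra! h
      exact hsq i j hji.symm (by omega) (by omega)
    · refine ⟨i, j, hji.symm, hu2.trans ?_⟩
      rw [h1, hdeg, h1, Nat.add_sub_cancel_left]
    · refine ⟨j, i, hji, hu2.trans ?_⟩
      rw [h1, hdeg, h1, Nat.add_sub_cancel, add_comm]
  · push Not at hj
    have hu1 : u = Pi.single i (u i) := by
      funext l
      by_cases hli : l = i
      · subst hli; simp
      · simp [hli, hj l hli]
    have hdeg : mdeg u = u i := by simpa only [mdeg_single] using congrArg mdeg hu1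
    exact .inl ⟨i, hdeg ▸ hu1⟩

section OrderIdeal

variable {A : Finset (Fin s → ℕ)}

theorem mdeg_le_topDegree {u : Fin s → ℕ} (hu : u ∈ A) : mdeg u ≤ topDegree A :=
  le_sup hu

theorem isMaximalIn_of_mdeg_eq_topDegree {u : Fin s → ℕ} (hu : u ∈ A)
    (h : mdeg u = topDegree A) : IsMaximalIn A u :=
  ⟨hu, fun _ hv huv => (eq_of_le_of_mdeg_le huv (h ▸ mdeg_le_topDegree hv)).symm⟩

theorem IsPure.mdeg_eq_topDegree (hp : IsPure A) (hA : A.Nonempty) {u : Fin s → ℕ}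
    (hu : IsMaximalIn A u) : mdeg u = topDegree A := by
  obtain ⟨w, hw, hwtop⟩ := exists_mem_eq_sup A hA mdeg
  exact (hp u w hu (isMaximalIn_of_mdeg_eq_topDegree hw hwtop.symm)).trans hwtop.symm

theorem exists_add_single_mem (hA : IsLowerSet (A : Set (Fin s → ℕ))) {u : Fin s → ℕ}
    (hu : u ∈ A) (hmax : ¬IsMaximalIn A u) : ∃ i, u + Pi.single i 1 ∈ A := by
  obtain ⟨v, hv, huv, hne⟩ : ∃ v ∈ A, u ≤ v ∧ v ≠ u := by
    simpa [IsMaximalIn, hu] using hmax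
  obtain ⟨-, i, hi⟩ := Pi.lt_def.1 (huv.lt_of_ne hne.symm)
  refine ⟨i, hA (fun l => ?_) hv⟩
  by_cases hl : l = i
  · subst hl; simpa using hi
  · simpa [hl] using huv l

theorem length_hVector (A : Finset (Fin s → ℕ)) : (hVector A).length = topDegree A + 1 := by
  simp [hVector]

theorem hVec_eq_of_hVector_eq {A : Finset (Fin s → ℕ)} {n a b : ℕ}
    (hh : hVector A = 1 :: (List.replicate (n - 1) a ++ [b])) {k : ℕ} (hk : 1 ≤ k) (hkn : k < n) :
    hVec A k = a := by
  obtain ⟨m, rfl⟩ : ∃ m, k = m + 1 := ⟨k - 1, by omega⟩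
  have : (hVector A)[m + 1]'(by rw [hh]; simp; omega) = hVec A (m + 1) := by simp [hVector]
  rw [← this]
  simp only [hh, List.getElem_cons_succ]
  rw [List.getElem_append_left (by simp; omega), List.getElem_replicate]

end OrderIdeal

section Graph

def edgeGraph (A : Finset (Fin s → ℕ)) : SimpleGraph (Fin s) where
  Adj i j := i ≠ j ∧ Pi.single i 1 + Pi.single j 1 ∈ A
  symm := ⟨fun _ _ h => ⟨h.1.symm, add_comm (Pi.single _ 1 : Fin s → ℕ) _ ▸ h.2⟩⟩
  loopless := ⟨fun _ h => h.1 rfl⟩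

open Classical in
noncomputable def compVerts (A : Finset (Fin s → ℕ)) (c : (edgeGraph A).ConnectedComponent) :
    Finset (Fin s) :=
  {i | Pi.single i 1 ∈ A ∧ (edgeGraph A).connectedComponentMk i = c}

/-- The edges of `edgeGraph A` inside `W`, together with the squares `x_i ^ 2 ∈ A`, `i ∈ W`,
as loops. -/
def edgesOn (A : Finset (Fin s → ℕ)) (W : Finset (Fin s)) : Finset (Fin s → ℕ) :=
  {u ∈ A | mdeg u = 2 ∧ ∀ i, u i ≠ 0 → i ∈ W}

variable {A : Finset (Fin s → ℕ)}

theorem mem_compVerts {c : (edgeGraph A).ConnectedComponent} {i : Fin s} :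
    i ∈ compVerts A c ↔ Pi.single i 1 ∈ A ∧ (edgeGraph A).connectedComponentMk i = c := by
  simp [compVerts]

theorem single_add_single_mem_edgesOn {W : Finset (Fin s)} {i j : Fin s} :
    Pi.single i 1 + Pi.single j 1 ∈ edgesOn A W ↔
      Pi.single i 1 + Pi.single j 1 ∈ A ∧ i ∈ W ∧ j ∈ W := by
  simp only [edgesOn, mem_filter, mdeg_add, mdeg_single, single_add_single_apply_ne_zero]
  constructor
  · rintro ⟨hA, -, hW⟩
    exact ⟨hA, hW i (.inl rfl), hW j (.inr rfl)⟩
  · rintro ⟨hA, hi, hj⟩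
    exact ⟨hA, by simp, by rintro l (rfl | rfl) <;> assumption⟩

theorem edgesOn_mono {W W' : Finset (Fin s)} (h : W ⊆ W') : edgesOn A W ⊆ edgesOn A W' :=
  fun _ hu => by
    simp only [edgesOn, mem_filter] at hu ⊢
    exact ⟨hu.1, hu.2.1, fun i hi => h (hu.2.2 i hi)⟩

theorem card_edgesOn_add_card_le_insert {W X : Finset (Fin s)} {z : Fin s} (hz : z ∉ W)
    (hX : X ⊆ insert z W) (hXA : ∀ x ∈ X, Pi.single z 1 + Pi.single x 1 ∈ A) :
    #(edgesOn A W) + #X ≤ #(edgesOn A (insert z W)) := by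
  classical
  set F := X.image fun x => (Pi.single z 1 + Pi.single x 1 : Fin s → ℕ)
  have hF : #F = #X := card_image_of_injective _ fun x y h =>
    single_one_injective (add_left_cancel h)
  have hsub : edgesOn A W ∪ F ⊆ edgesOn A (insert z W) := by
    refine union_subset (edgesOn_mono (subset_insert z W)) ?_
    simp only [F, image_subset_iff, single_add_single_mem_edgesOn]
    exact fun x hx => ⟨hXA x hx, mem_insert_self z W, hX hx⟩
  have hdisj : Disjoint (edgesOn A W) F := by
    simp only [F, disjoint_right, mem_image, forall_exists_index, and_imp]
    rintro _ x - rfl hx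
    exact hz (single_add_single_mem_edgesOn.1 hx).2.1
  rw [← hF, ← card_union_of_disjoint hdisj]
  exact card_le_card hsub

theorem edgesOn_empty : edgesOn A ∅ = ∅ :=
  eq_empty_of_forall_notMem fun u hu => by
    obtain ⟨-, hdeg, hW⟩ := mem_filter.1 hu
    obtain ⟨i, hi⟩ := exists_ne_zero_of_mdeg_ne_zero (by omega : mdeg u ≠ 0)
    exact notMem_empty i (hW i hi)

theorem one_le_card_edgesOn_singleton {i : Fin s} (h : Pi.single i 1 + Pi.single i 1 ∈ A) :
    1 ≤ #(edgesOn A {i}) :=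
  card_pos.2 ⟨_, single_add_single_mem_edgesOn.2 ⟨h, mem_singleton_self i, mem_singleton_self i⟩⟩

theorem card_edgesOn_add_three_le_of_triangle {i j k : Fin s} (hij : (edgeGraph A).Adj i j)
    (hik : (edgeGraph A).Adj i k) (hjk : (edgeGraph A).Adj j k) :
    #(edgesOn A {i}) + 3 ≤ #(edgesOn A {k, j, i}) := by
  have hj := card_edgesOn_add_card_le_insert (W := {i}) (X := {i}) (z := j)
    (by simpa using hij.ne') (by simp) (by simpa using hij.symm.2)
  have hk := card_edgesOn_add_card_le_insert (W := {j, i}) (X := {i, j}) (z := k)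
    (by simp [hik.ne', hjk.ne']) (by simp [insert_subset_iff])
    (by simpa using ⟨hik.symm.2, hjk.symm.2⟩)
  rw [card_singleton] at hj
  rw [card_pair hij.ne] at hk
  omega

theorem card_filter_mdeg_eq_one :
    #(A.filter (mdeg · = 1)) = ∑ c, #(compVerts A c) := by
  classical
  have hA1 : A.filter (mdeg · = 1) =
      (univ.filter fun i => Pi.single i 1 ∈ A).image fun i => (Pi.single i 1 : Fin s → ℕ) := by
    ext u
    simp only [mem_filter, mem_image, mem_univ, true_and]
    constructor
    · rintro ⟨hu, hdeg⟩
      obtain ⟨i, hi⟩ := exists_ne_zero_of_mdeg_ne_zero (by omega : mdeg u ≠ 0)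
      have hiu : Pi.single i 1 = u :=
        eq_of_le_of_mdeg_le (single_le (Nat.one_le_iff_ne_zero.2 hi)) (by simp [hdeg, mdeg_single])
      exact ⟨i, hiu ▸ hu, hiu⟩
    · rintro ⟨i, hi, rfl⟩
      exact ⟨hi, mdeg_single i 1⟩
  rw [hA1, card_image_of_injective _ single_one_injective,
    card_eq_sum_card_fiberwise (f := (edgeGraph A).connectedComponentMk) (t := univ)
      fun _ _ => mem_univ _]
  simp only [filter_filter, compVerts]
  -- the two sums differ only in the `Fintype` instance on the components
  convert rfl

variable (hA : IsLowerSet (A : Set (Fin s → ℕ)))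
include hA

theorem single_mem_of_ne_zero {u : Fin s → ℕ} (hu : u ∈ A) {i : Fin s} (hi : u i ≠ 0) :
    Pi.single i 1 ∈ A :=
  hA (single_le (Nat.one_le_iff_ne_zero.2 hi)) hu

theorem single_mem_of_adj {i j : Fin s} (h : (edgeGraph A).Adj i j) : Pi.single j 1 ∈ A :=
  single_mem_of_ne_zero hA h.2 (single_add_single_apply_ne_zero.2 (.inr rfl))

theorem edgeGraph_adj_of_ne_zero {u : Fin s → ℕ} (hu : u ∈ A) {i j : Fin s} (hij : i ≠ j)
    (hi : u i ≠ 0) (hj : u j ≠ 0) : (edgeGraph A).Adj i j :=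
  ⟨hij, hA (single_add_single_le hij hi hj) hu⟩

theorem mem_compVerts_of_ne_zero {u : Fin s → ℕ} (hu : u ∈ A) {i j : Fin s} (hi : u i ≠ 0)
    (hj : u j ≠ 0) : j ∈ compVerts A ((edgeGraph A).connectedComponentMk i) := by
  refine mem_compVerts.2 ⟨single_mem_of_ne_zero hA hu hj, ?_⟩
  obtain rfl | hji := eq_or_ne j i
  · rfl
  · exact SimpleGraph.ConnectedComponent.connectedComponentMk_eq_of_adj
      (edgeGraph_adj_of_ne_zero hA hu hji hj hi)

theorem exists_adj_of_ssubset_compVerts {c : (edgeGraph A).ConnectedComponent}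
    {W : Finset (Fin s)} (hW : W ⊂ compVerts A c) (hne : W.Nonempty) :
    ∃ y ∈ W, ∃ z ∈ compVerts A c, z ∉ W ∧ (edgeGraph A).Adj y z := by
  obtain ⟨x, hxc, hxW⟩ := exists_of_ssubset hW
  obtain ⟨w, hw⟩ := hne
  obtain ⟨p⟩ : (edgeGraph A).Reachable w x := SimpleGraph.ConnectedComponent.eq.1
    ((mem_compVerts.1 (hW.subset hw)).2.trans (mem_compVerts.1 hxc).2.symm)
  obtain ⟨d, -, hd, hd'⟩ := p.exists_boundary_dart (W : Set (Fin s)) hw hxW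
  refine ⟨d.fst, hd, d.snd, mem_compVerts.2 ⟨single_mem_of_adj hA d.adj, ?_⟩, hd', d.adj⟩
  rw [← SimpleGraph.ConnectedComponent.connectedComponentMk_eq_of_adj d.adj]
  exact (mem_compVerts.1 (hW.subset hd)).2

theorem card_compVerts_add_card_edgesOn_le {c : (edgeGraph A).ConnectedComponent}
    {W : Finset (Fin s)} (hWc : W ⊆ compVerts A c) (hne : W.Nonempty) :
    #(compVerts A c) + #(edgesOn A W) ≤ #(edgesOn A (compVerts A c)) + #W := by
  obtain rfl | hssub := hWc.eq_or_ssubset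
  · rw [add_comm]
  · obtain ⟨y, hy, z, hzc, hzW, hyz⟩ := exists_adj_of_ssubset_compVerts hA hssub hne
    have hstep := card_edgesOn_add_card_le_insert (X := {y}) hzW
      (singleton_subset_iff.2 (mem_insert_of_mem hy)) (by simpa using hyz.symm.2)
    have hrec := card_compVerts_add_card_edgesOn_le (insert_subset hzc hWc) (insert_nonempty z W)
    rw [card_insert_of_notMem hzW] at hrec
    rw [card_singleton] at hstep
    omega
termination_by #(compVerts A c) - #W
decreasing_by
  rw [card_insert_of_notMem hzW]
  have := card_lt_card hssub
  omega

theorem card_filter_mdeg_eq_two :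
    #(A.filter (mdeg · = 2)) = ∑ c, #(edgesOn A (compVerts A c)) := by
  classical
  have hsupp : ∀ u ∈ A, mdeg u = 2 → ∃ i, u i ≠ 0 := fun u _ hdeg =>
    exists_ne_zero_of_mdeg_ne_zero (by omega)
  rw [← card_biUnion]
  · congr 1
    ext u
    simp only [mem_filter, mem_biUnion, mem_univ, true_and, edgesOn]
    constructor
    · rintro ⟨hu, hdeg⟩
      obtain ⟨i, hi⟩ := hsupp u hu hdeg
      exact ⟨_, hu, hdeg, fun j hj => mem_compVerts_of_ne_zero hA hu hi hj⟩
    · rintro ⟨-, hu, hdeg, -⟩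
      exact ⟨hu, hdeg⟩
  · intro c _ c' _ hcc'
    simp only [Function.onFun, disjoint_left, edgesOn, mem_filter]
    rintro u ⟨hu, hdeg, hc⟩ ⟨-, -, hc'⟩
    obtain ⟨i, hi⟩ := hsupp u hu hdeg
    exact hcc' ((mem_compVerts.1 (hc i hi)).2.symm.trans (mem_compVerts.1 (hc' i hi)).2)

theorem exists_card_le_card_edgesOn {v : Fin s → ℕ} (hv : v ∈ A) (hdeg : mdeg v = 3) :
    ∃ W : Finset (Fin s), W.Nonempty ∧ (∀ j ∈ W, v j ≠ 0) ∧ #W ≤ #(edgesOn A W) := by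
  by_cases hsq : ∃ l, 2 ≤ v l
  · obtain ⟨l, hl⟩ := hsq
    refine ⟨{l}, singleton_nonempty l, by simp; omega, ?_⟩
    rw [card_singleton]
    exact one_le_card_edgesOn_singleton (hA (single_add_single_self_le hl) hv)
  -- A squarefree `v` has exactly `mdeg v = 3` variables, which span a triangle.
  push Not at hsq
  have hsupp : #{l | v l ≠ 0} = 3 := by
    rw [card_filter, ← hdeg]
    exact sum_congr rfl fun l _ => by have := hsq l; split_ifs <;> omega
  obtain ⟨i, j, k, hij, hik, hjk, hijk⟩ := card_eq_three.1 hsupp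
  have hW : ∀ l ∈ ({i, j, k} : Finset (Fin s)), v l ≠ 0 := by
    rw [← hijk]
    simp
  refine ⟨{i, j, k}, insert_nonempty _ _, hW, ?_⟩
  have hi := hW i (by simp)
  have hj := hW j (by simp)
  have hk := hW k (by simp)
  have := card_edgesOn_add_three_le_of_triangle (edgeGraph_adj_of_ne_zero hA hv hjk.symm hk hj)
    (edgeGraph_adj_of_ne_zero hA hv hik.symm hk hi) (edgeGraph_adj_of_ne_zero hA hv hij.symm hj hi)
  have := card_le_three (a := i) (b := j) (c := k)
  omega

theorem card_compVerts_le_card_edgesOn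
    (hext : ∀ u ∈ A, mdeg u ≤ 2 → ∃ i, u + Pi.single i 1 ∈ A)
    (c : (edgeGraph A).ConnectedComponent) :
    #(compVerts A c) ≤ #(edgesOn A (compVerts A c)) := by
  obtain h | ⟨r, hr⟩ := (compVerts A c).eq_empty_or_nonempty
  · simp [h]
  obtain ⟨hrA, rfl⟩ := mem_compVerts.1 hr
  obtain ⟨i, hi⟩ := hext _ hrA (by rw [mdeg_single]; omega)
  obtain ⟨t, ht⟩ := hext _ hi (by rw [mdeg_add, mdeg_single, mdeg_single])
  obtain ⟨W, hne, hWv, hW⟩ := exists_card_le_card_edgesOn hA ht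
    (by rw [mdeg_add, mdeg_add, mdeg_single, mdeg_single, mdeg_single])
  have := card_compVerts_add_card_edgesOn_le hA
    (fun j hj => mem_compVerts_of_ne_zero hA ht (i := r) (by simp) (hWv j hj)) hne
  omega

theorem card_edgesOn_le_card (hext : ∀ u ∈ A, mdeg u ≤ 2 → ∃ i, u + Pi.single i 1 ∈ A)
    (h12 : #(A.filter (mdeg · = 1)) = #(A.filter (mdeg · = 2))) {u : Fin s → ℕ} (hu : u ∈ A)
    {W : Finset (Fin s)} (hW : ∀ j ∈ W, u j ≠ 0) : #(edgesOn A W) ≤ #W := by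
  obtain rfl | ⟨i, hi⟩ := W.eq_empty_or_nonempty
  · simp [edgesOn_empty]
  have hcomp := (sum_eq_sum_iff_of_le fun c _ => card_compVerts_le_card_edgesOn hA hext c).1
    (by rw [← card_filter_mdeg_eq_one, ← card_filter_mdeg_eq_two hA, h12])
    ((edgeGraph A).connectedComponentMk i) (mem_univ _)
  have := card_compVerts_add_card_edgesOn_le hA
    (fun j hj => mem_compVerts_of_ne_zero hA hu (hW i hi) (hW j hj)) ⟨i, hi⟩
  omega

end Graph

section Sparse

variable {A : Finset (Fin s → ℕ)} (hA : IsLowerSet (A : Set (Fin s → ℕ))) {u : Fin s → ℕ}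
  (hu : u ∈ A) (hsparse : ∀ W : Finset (Fin s), (∀ j ∈ W, u j ≠ 0) → #(edgesOn A W) ≤ #W)
include hA hu hsparse

theorem false_of_two_squares {i j : Fin s} (hij : i ≠ j) (hi : 2 ≤ u i) (hj : 2 ≤ u j) :
    False := by
  have hloop := one_le_card_edgesOn_singleton (hA (single_add_single_self_le hi) hu)
  have hstep := card_edgesOn_add_card_le_insert (W := {i}) (X := {j, i}) (z := j)
    (by simpa using hij.symm) (subset_refl _)
    (by simpa using ⟨hA (single_add_single_self_le hj) hu,
      hA (single_add_single_le hij.symm (by omega) (by omega)) hu⟩)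
  have hsp := hsparse {j, i} (by simp; omega)
  rw [card_pair hij.symm] at hstep hsp
  omega

theorem false_of_triangle_of_square {i j k : Fin s} (hij : i ≠ j) (hik : i ≠ k) (hjk : j ≠ k)
    (hi : 2 ≤ u i) (hj : u j ≠ 0) (hk : u k ≠ 0) : False := by
  have hi' : u i ≠ 0 := by omega
  have hloop := one_le_card_edgesOn_singleton (hA (single_add_single_self_le hi) hu)
  have htri := card_edgesOn_add_three_le_of_triangle (edgeGraph_adj_of_ne_zero hA hu hij hi' hj)
    (edgeGraph_adj_of_ne_zero hA hu hik hi' hk) (edgeGraph_adj_of_ne_zero hA hu hjk hj hk)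
  have hsp := hsparse {k, j, i} (by simp [hi', hj, hk])
  have := card_le_three (a := k) (b := j) (c := i)
  omega

theorem false_of_four_ne_zero {i j k l : Fin s} (hij : i ≠ j) (hik : i ≠ k) (hil : i ≠ l)
    (hjk : j ≠ k) (hjl : j ≠ l) (hkl : k ≠ l) (hi : u i ≠ 0) (hj : u j ≠ 0) (hk : u k ≠ 0)
    (hl : u l ≠ 0) : False := by
  have htri := card_edgesOn_add_three_le_of_triangle (edgeGraph_adj_of_ne_zero hA hu hij hi hj)
    (edgeGraph_adj_of_ne_zero hA hu hik hi hk) (edgeGraph_adj_of_ne_zero hA hu hjk hj hk)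
  have hstep := card_edgesOn_add_card_le_insert (W := {k, j, i}) (X := {i, j}) (z := l)
    (by simp [hil.symm, hjl.symm, hkl.symm]) (by simp [insert_subset_iff])
    (by simpa using ⟨(edgeGraph_adj_of_ne_zero hA hu hil.symm hl hi).2,
      (edgeGraph_adj_of_ne_zero hA hu hjl.symm hl hj).2⟩)
  have hsp := hsparse {l, k, j, i} (by simp [hi, hj, hk, hl])
  rw [card_pair hij] at hstep
  have := card_le_four (a := l) (b := k) (c := j) (d := i)
  omega

theorem false_of_three_ne_zero (hdeg : 4 ≤ mdeg u) {i j k : Fin s} (hij : i ≠ j) (hik : i ≠ k)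
    (hjk : j ≠ k) (hi : u i ≠ 0) (hj : u j ≠ 0) (hk : u k ≠ 0) : False := by
  by_cases hsq : 2 ≤ u i ∨ 2 ≤ u j ∨ 2 ≤ u k
  · obtain hsq | hsq | hsq := hsq
    · exact false_of_triangle_of_square hA hu hsparse hij hik hjk hsq hj hk
    · exact false_of_triangle_of_square hA hu hsparse hij.symm hjk hik hsq hi hk
    · exact false_of_triangle_of_square hA hu hsparse hik.symm hjk.symm hij hsq hi hj
  by_cases hl : ∃ l, l ≠ i ∧ l ≠ j ∧ l ≠ k ∧ u l ≠ 0
  · obtain ⟨l, hli, hlj, hlk, hl⟩ := hl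
    exact false_of_four_ne_zero hA hu hsparse hij hik (Ne.symm hli) hjk (Ne.symm hlj)
      (Ne.symm hlk) hi hj hk hl
  -- Otherwise `u` is squarefree with support `{i, j, k}`, so it has degree at most three.
  push Not at hsq hl
  have hsum : mdeg u = ∑ l ∈ {i, j, k}, u l :=
    (sum_subset (subset_univ _) fun l _ hl' => by
      by_contra h
      simp only [mem_insert, mem_singleton, not_or] at hl'
      exact h (hl l hl'.1 hl'.2.1 hl'.2.2)).symm
  have hle : mdeg u ≤ 3 := calc
    mdeg u = ∑ l ∈ {i, j, k}, u l := hsum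
    _ ≤ ∑ _l ∈ {i, j, k}, 1 := sum_le_sum fun l hl' => by
      simp only [mem_insert, mem_singleton] at hl'
      obtain rfl | rfl | rfl := hl' <;> omega
    _ = #{i, j, k} := (card_eq_sum_ones _).symm
    _ ≤ 3 := card_le_three
  omega

theorem eq_single_or_eq_single_add_single_of_card_edgesOn_le (hdeg : 4 ≤ mdeg u) :
    (∃ i, u = Pi.single i (mdeg u)) ∨
      ∃ i j, i ≠ j ∧ u = Pi.single i 1 + Pi.single j (mdeg u - 1) :=
  eq_single_or_eq_single_add_single (by omega) (fun _ _ => false_of_two_squares hA hu hsparse)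
    (fun _ _ _ => false_of_three_ne_zero hA hu hsparse hdeg)

end Sparse

end

theorem stmt_8_general (n a b s : ℕ) (hn : 4 ≤ n)
    (A : Finset (Fin s → ℕ)) (hA : IsOrderIdeal A) (hp : IsPure A)
    (hh : hVector A = 1 :: (List.replicate (n - 1) a ++ [b])) :
    ∀ u : Fin s → ℕ, IsMaximalIn A u →
      (∃ i : Fin s, u = Pi.single i n) ∨
      (∃ i j : Fin s, i ≠ j ∧ u = Pi.single i 1 + Pi.single j (n - 1)) := by
  intro u hu
  have hlower : IsLowerSet (A : Set (Fin s → ℕ)) := fun v w hwv hv => hA.2 v hv w hwv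
  have htop : topDegree A = n := by
    have := congrArg List.length hh
    simp only [length_hVector, List.length_cons, List.length_append, List.length_replicate,
      List.length_nil] at this
    omega
  have hmax : ∀ v, IsMaximalIn A v → mdeg v = n := fun v hv =>
    htop ▸ hp.mdeg_eq_topDegree hA.1 hv
  have hext : ∀ v ∈ A, mdeg v ≤ 2 → ∃ i, v + Pi.single i 1 ∈ A := fun v hv hdeg =>
    exists_add_single_mem hlower hv fun hvmax => by have := hmax v hvmax; omega
  have h12 : #(A.filter (mdeg · = 1)) = #(A.filter (mdeg · = 2)) :=
    (hVec_eq_of_hVector_eq hh le_rfl (by omega)).trans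
      (hVec_eq_of_hVector_eq hh one_le_two (by omega)).symm
  rw [← hmax u hu]
  exact eq_single_or_eq_single_add_single_of_card_edgesOn_le hlower hu.1
    (fun W hW => card_edgesOn_le_card hlower hext h12 hu.1 hW) (hmax u hu ▸ hn)

/-- If `A` is a pure order ideal in `s` variables with h-vector
`(1, a, a, ..., a, b)` of length `n+1`, `n ≥ 4`, then every maximal monomial of
`A` is of the form `x_i^n` or `x_i * x_j^(n-1)` with `i ≠ j`. -/
theorem stmt_8 (n a b s : ℕ) (hn : 4 ≤ n) (ha : 0 < a) (hb : 0 < b)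
    (A : Finset (Fin s → ℕ)) (hA : IsOrderIdeal A) (hp : IsPure A)
    (hh : hVector A = 1 :: (List.replicate (n - 1) a ++ [b])) :
    ∀ u : Fin s → ℕ, IsMaximalIn A u →
      (∃ i : Fin s, u = Pi.single i n) ∨
      (∃ i j : Fin s, i ≠ j ∧ u = Pi.single i 1 + Pi.single j (n - 1)) :=
  stmt_8_general n a b s hn A hA hp hh
end
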